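/- arXiv:2501.01179 — 2 statements merged into one kernel-verified Lean document; each statement's English description precedes it below -/
import Mathlib

section
/- Let k be a field of characteristic p > 0. Consider the blow-up chart map b* : k[x₁, …, xₙ] → k[u₁, …, uₙ] given by x₁ ↦ u₁, xᵢ ↦ u₁·uᵢ for 2 ≤ i ≤ n. Then for every polynomial f ∈ k[x₁,…,xₙ], applying the derivation ∂ = Σᵢ xᵢ²·∂/∂xᵢ and then b* equals applying b* and then u₁·ψ, where ψ = u₁·∂/∂u₁ + Σ_{i=2}^{n}(−uᵢ + uᵢ²)·∂/∂uᵢ. That is, b*(∂(f)) = u₁·ψ(b*(f)). -/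
/-!
Both sides are derivations `k[x] → k[u]` along the algebra map `b*`: for `b* ∘ ∂` this is
clear, and `u₁ ψ` is a derivation of `k[u]`. Such a derivation is determined by its values on
the variables, and there the identity is a direct computation: `u₁ ψ(u₁) = u₁²` and
`u₁ ψ(u₁ uᵢ) = u₁ (uᵢ u₁ + u₁ (-uᵢ + uᵢ²)) = (u₁ uᵢ)²`, which are `b*(x₁²)` and `b*(xᵢ²)`.
-/

open MvPolynomial

theorem Derivation.finset_sum_apply {ι R A M : Type*} [CommSemiring R] [CommSemiring A]
    [Algebra R A] [AddCommMonoid M] [Module A M] [Module R M] (s : Finset ι)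
    (D : ι → Derivation R A M) (a : A) :
    (∑ i ∈ s, D i) a = ∑ i ∈ s, D i a := by
  rw [← coeFnAddMonoidHom_apply, map_sum, Finset.sum_apply]
  rfl

namespace MvPolynomial

section
variable {σ R : Type*} [CommSemiring R]

theorem algHom_apply_derivation_eq_of_X {A : Type*} [CommSemiring A] [Algebra R A]
    (φ : MvPolynomial σ R →ₐ[R] A) (D : Derivation R (MvPolynomial σ R) (MvPolynomial σ R))
    (E : Derivation R A A) (h : ∀ j, φ (D (X j)) = E (φ (X j))) (f : MvPolynomial σ R) :
    φ (D f) = E (φ f) := by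
  induction f using MvPolynomial.induction_on with
  | C a =>
    simp only [D.map_algebraMap, ← algebraMap_eq, AlgHom.commutes, E.map_algebraMap, map_zero]
  | add p q hp hq => simp only [map_add, hp, hq]
  | mul_X p j ih => simp only [Derivation.leibniz, map_add, map_mul, smul_eq_mul, ih, h]

variable [Fintype σ]

theorem sum_smul_pderiv_apply (c : σ → MvPolynomial σ R) (f : MvPolynomial σ R) :
    (∑ i, c i • pderiv i : Derivation R (MvPolynomial σ R) (MvPolynomial σ R)) f
      = ∑ i, c i * pderiv i f := by
  simp only [Derivation.finset_sum_apply, Derivation.smul_apply, smul_eq_mul]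

theorem sum_smul_pderiv_X [DecidableEq σ] (c : σ → MvPolynomial σ R) (j : σ) :
    (∑ i, c i • pderiv i : Derivation R (MvPolynomial σ R) (MvPolynomial σ R)) (X j) = c j := by
  simp [sum_smul_pderiv_apply, pderiv_X, Pi.single_apply]

end

section BlowUp
variable {σ R : Type*} [CommRing R] [DecidableEq σ]

noncomputable def blowUpChart (a : σ) : MvPolynomial σ R →ₐ[R] MvPolynomial σ R :=
  aeval fun i => if i = a then X a else X a * X i

variable [Fintype σ]

noncomputable def quadraticDerivation : Derivation R (MvPolynomial σ R) (MvPolynomial σ R) :=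
  ∑ i, (X i ^ 2 : MvPolynomial σ R) • pderiv i

noncomputable def blowUpDerivation (a : σ) :
    Derivation R (MvPolynomial σ R) (MvPolynomial σ R) :=
  ∑ i, (if i = a then X i else -X i + X i ^ 2 : MvPolynomial σ R) • pderiv i

theorem blowUpChart_quadraticDerivation_X (a j : σ) :
    blowUpChart a (quadraticDerivation (X j : MvPolynomial σ R))
      = X a * blowUpDerivation a (blowUpChart a (X j)) := by
  simp only [blowUpChart, quadraticDerivation, blowUpDerivation, sum_smul_pderiv_X, map_pow,
    aeval_X]
  split_ifs with hj
  · simp only [sum_smul_pderiv_X, if_pos, sq]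
  · simp only [Derivation.leibniz, sum_smul_pderiv_X, if_pos, if_neg hj, smul_eq_mul]
    ring

end BlowUp

end MvPolynomial

/-- Let `k` be a field and `n ≥ 2` (here `n + 2` variables).  Let
`b* : k[x₁,…,xₙ] → k[u₁,…,uₙ]` be the blow-up chart map `x₁ ↦ u₁`, `xᵢ ↦ u₁uᵢ` (`i ≥ 2`).
Then for every polynomial `f`, `b*(∂ f) = u₁ · ψ (b* f)`, where `∂ = Σᵢ xᵢ² ∂/∂xᵢ` and
`ψ = u₁ ∂/∂u₁ + Σ_{i≥2} (−uᵢ + uᵢ²) ∂/∂uᵢ`. -/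
theorem statement6 {k : Type*} [Field k] (n : ℕ)
    (f : MvPolynomial (Fin (n + 2)) k) :
    aeval (fun i : Fin (n + 2) =>
        if i = 0 then (X 0 : MvPolynomial (Fin (n + 2)) k) else X 0 * X i)
      (∑ i, X i ^ 2 * pderiv i f)
    = X 0 * ∑ i, (if i = 0 then X i else -X i + X i ^ 2) *
        pderiv i (aeval (fun i : Fin (n + 2) =>
          if i = 0 then (X 0 : MvPolynomial (Fin (n + 2)) k) else X 0 * X i) f) := by
  have h := algHom_apply_derivation_eq_of_X (blowUpChart (0 : Fin (n + 2)))
    quadraticDerivation ((X 0 : MvPolynomial (Fin (n + 2)) k) • blowUpDerivation 0)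
    (fun j => by rw [Derivation.smul_apply, smul_eq_mul, blowUpChart_quadraticDerivation_X]) f
  rwa [Derivation.smul_apply, smul_eq_mul, quadraticDerivation, blowUpDerivation,
    sum_smul_pderiv_apply, sum_smul_pderiv_apply] at h
end

section
/- Let k be a field of characteristic p > 0 and consider on k[u₀, u₁, …, u_{n−2}] (n ≥ 3) the derivation ∂ = u₀·∂/∂u₀ + Σ_{i=1}^{n−2} (uᵢ − uᵢ²)·∂/∂uᵢ. Then ∂^[p] = ∂. -/
/-!
In characteristic `p` the iterate `∂^[p]` of a derivation is again a derivation, since `p`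
divides the binomial coefficients in the iterated Leibniz rule; so it suffices to compare
`∂^[p]` and `∂` on the variables. As `∂ u₀ = u₀`, only `uᵢ` with `i ≥ 1` matters, where `∂`
restricts to the logistic derivation `(u - u²) d/du` of `k[u]`. The substitution
`u ↦ X/(1+X)` embeds `k[u]` into `k⟦X⟧` and turns it into the Euler operator `X d/dX`, which
multiplies the `n`-th coefficient by `n`; its `p`-th iterate is itself by Fermat's little theorem.
-/

open Finset

namespace Derivation

variable {R A : Type*} [CommSemiring R] [CommSemiring A] [Algebra R A]

theorem iterate_apply_mul (D : Derivation R A A) (n : ℕ) (a b : A) :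
    D^[n] (a * b) = ∑ ij ∈ antidiagonal n, n.choose ij.1 • (D^[ij.1] a * D^[ij.2] b) := by
  induction n with
  | zero => simp
  | succ n ih =>
    rw [sum_antidiagonal_choose_succ_nsmul (fun i j => D^[i] a * D^[j] b) n]
    simp only [Function.iterate_succ_apply', ih, map_sum, map_nsmul, leibniz, smul_eq_mul,
      smul_add, sum_add_distrib]
    congr 1
    refine sum_congr rfl fun ⟨i, j⟩ hij ↦ ?_
    rw [n.choose_symm_of_eq_add (mem_antidiagonal.1 hij).symm]
    ring

theorem iterate_char_apply_mul (p : ℕ) [hp : Fact p.Prime] [CharP A p] (D : Derivation R A A)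
    (a b : A) : D^[p] (a * b) = a * D^[p] b + b * D^[p] a := by
  rw [iterate_apply_mul, Nat.sum_antidiagonal_eq_sum_range_succ_mk, sum_range_succ,
    ← Nat.sub_add_cancel hp.out.one_le, sum_range_succ', Nat.sub_add_cancel hp.out.one_le,
    sum_eq_zero]
  · simp [mul_comm]
  · intro i hi
    have hdvd : p ∣ p.choose (i + 1) :=
      hp.out.dvd_choose_self i.succ_ne_zero (by grind)
    rw [nsmul_eq_mul, (CharP.cast_eq_zero_iff A p _).2 hdvd, zero_mul]

def iterateChar (p : ℕ) [Fact p.Prime] [CharP A p] (D : Derivation R A A) :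
    Derivation R A A :=
  { toLinearMap := (D : A →ₗ[R] A) ^ p
    map_one_eq_zero' := by
      rw [Module.End.pow_apply, coeFn_coe, ← Nat.succ_pred_eq_of_pos (Fact.out : p.Prime).pos,
        Function.iterate_succ_apply, map_one_eq_zero, iterate_map_zero]
    leibniz' := fun a b ↦ by
      simp only [Module.End.pow_apply, coeFn_coe, iterate_char_apply_mul, smul_eq_mul] }

theorem coe_iterateChar (p : ℕ) [Fact p.Prime] [CharP A p] (D : Derivation R A A) :
    ⇑(D.iterateChar p) = (⇑D)^[p] :=
  Module.End.coe_pow _ _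

theorem coe_finset_sum {M ι : Type*} [AddCommMonoid M] [Module A M] [Module R M]
    (s : Finset ι) (D : ι → Derivation R A M) : ⇑(∑ i ∈ s, D i) = ∑ i ∈ s, ⇑(D i) :=
  map_sum coeFnAddMonoidHom D s

end Derivation

open Polynomial in
theorem Polynomial.semiconj_derivation_of_map_X {R B : Type*} [CommSemiring R] [CommSemiring B]
    [Algebra R B] (f : R[X] →ₐ[R] B) (d : Derivation R R[X] R[X]) (E : Derivation R B B)
    (h : f (d X) = E (f X)) : Function.Semiconj f d E := by
  intro q
  induction q using Polynomial.induction_on with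
  | C a => rw [← algebraMap_eq, AlgHom.commutes, Derivation.map_algebraMap,
      Derivation.map_algebraMap, map_zero]
  | add q r hq hr => rw [map_add, map_add, map_add, hq, hr, map_add]
  | monomial n a ih =>
    rw [pow_succ, ← mul_assoc]
    generalize C a * X ^ n = q at ih ⊢
    simp only [Derivation.leibniz, smul_eq_mul, map_add, map_mul, h, ih]

namespace PowerSeries

section Euler

variable {R : Type*} [CommSemiring R]

variable (R) in
noncomputable def eulerDerivation : Derivation R R⟦X⟧ R⟦X⟧ :=
  (X : R⟦X⟧) • derivative R

theorem eulerDerivation_apply (f : R⟦X⟧) : eulerDerivation R f = X * derivative R f := rfl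

theorem coeff_eulerDerivation (n : ℕ) (f : R⟦X⟧) :
    coeff n (eulerDerivation R f) = n * coeff n f := by
  rw [eulerDerivation_apply]
  cases n with
  | zero => simp
  | succ n => rw [coeff_succ_X_mul, coeff_derivative]; push_cast; ring

theorem coeff_iterate_eulerDerivation (r n : ℕ) (f : R⟦X⟧) :
    coeff n ((eulerDerivation R)^[r] f) = (n : R) ^ r * coeff n f := by
  induction r with
  | zero => simp
  | succ r ih => rw [Function.iterate_succ_apply', coeff_eulerDerivation, ih, pow_succ']; ring

theorem iterate_char_eulerDerivation (p : ℕ) [Fact p.Prime] [CharP R p] :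
    (eulerDerivation R)^[p] = eulerDerivation R := by
  funext f
  ext n
  rw [coeff_iterate_eulerDerivation, coeff_eulerDerivation, ← frobenius_def, map_natCast]

end Euler

theorem aeval_injective_of_constantCoeff_eq_zero {R : Type*} [CommRing R] [IsDomain R]
    {f : R⟦X⟧} (h0 : constantCoeff f = 0) (hf : f ≠ 0) :
    Function.Injective (Polynomial.aeval f : Polynomial R → R⟦X⟧) := by
  have hcoeff (q : Polynomial R) : constantCoeff (Polynomial.aeval f q) = q.coeff 0 := by
    rw [Polynomial.coeff_zero_eq_eval_zero, ← h0, Polynomial.aeval_def, Polynomial.hom_eval₂]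
    simp
  refine (injective_iff_map_eq_zero _).2 fun q ↦ ?_
  induction q using Polynomial.recOnHorner with
  | M0 => exact fun _ ↦ rfl
  | MC q a hq0 ha _ =>
    exact fun h ↦ absurd (by simpa [hcoeff, hq0] using congrArg constantCoeff h) ha
  | MX q _ ih =>
    intro h
    rw [map_mul, Polynomial.aeval_X, mul_eq_zero] at h
    rw [ih (h.resolve_right hf), zero_mul]

variable {k : Type*} [Field k]

theorem eulerDerivation_X_mul_inv :
    eulerDerivation k (X * (1 + X)⁻¹) = X * (1 + X)⁻¹ - (X * (1 + X)⁻¹) ^ 2 := by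
  rw [eulerDerivation_apply, Derivation.leibniz, derivative_inv', map_add, derivative_X,
    Derivation.map_one_eq_zero]
  simp only [smul_eq_mul]
  ring

theorem constantCoeff_X_mul_inv : constantCoeff (X * (1 + X)⁻¹ : k⟦X⟧) = 0 := by
  simp

theorem X_mul_inv_ne_zero : (X * (1 + X)⁻¹ : k⟦X⟧) ≠ 0 := by
  refine mul_ne_zero X_ne_zero fun h ↦ ?_
  simpa using congrArg constantCoeff h

end PowerSeries

namespace Polynomial

section Logistic

variable (k : Type*) [CommRing k]

noncomputable def logisticDerivation : Derivation k k[X] k[X] :=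
  (X - X ^ 2 : k[X]) • derivative'

theorem logisticDerivation_X : logisticDerivation k X = X - X ^ 2 := by
  simp [logisticDerivation]

end Logistic

theorem iterate_char_logisticDerivation_X {k : Type*} [Field k] (p : ℕ) [Fact p.Prime]
    [CharP k p] : (logisticDerivation k)^[p] X = logisticDerivation k X := by
  have hsemiconj : Function.Semiconj (aeval (PowerSeries.X * (1 + PowerSeries.X)⁻¹))
      (logisticDerivation k) (PowerSeries.eulerDerivation k) :=
    semiconj_derivation_of_map_X _ _ _ (by
      rw [logisticDerivation_X, map_sub, map_pow, aeval_X, PowerSeries.eulerDerivation_X_mul_inv])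
  apply PowerSeries.aeval_injective_of_constantCoeff_eq_zero
    PowerSeries.constantCoeff_X_mul_inv PowerSeries.X_mul_inv_ne_zero
  rw [hsemiconj.iterate_right, PowerSeries.iterate_char_eulerDerivation, hsemiconj]

end Polynomial

open MvPolynomial

theorem MvPolynomial.iterate_char_derivation_eq_self {σ k : Type*} [Field k] (p : ℕ)
    [Fact p.Prime] [CharP k p] (D : Derivation k (MvPolynomial σ k) (MvPolynomial σ k))
    (hD : ∀ i, D (X i) = X i ∨ D (X i) = X i - X i ^ 2) : (⇑D)^[p] = D := by
  suffices D.iterateChar p = D by rw [← Derivation.coe_iterateChar, this]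
  refine derivation_ext fun i ↦ ?_
  rw [Derivation.coe_iterateChar]
  rcases hD i with hfix | hlogistic
  · rw [Function.iterate_fixed hfix, hfix]
  · have hsemiconj : Function.Semiconj (Polynomial.aeval (X i : MvPolynomial σ k))
        (Polynomial.logisticDerivation k) D :=
      Polynomial.semiconj_derivation_of_map_X _ _ _ (by
        rw [Polynomial.logisticDerivation_X, map_sub, map_pow, Polynomial.aeval_X, hlogistic])
    rw [← Polynomial.aeval_X (R := k) (X i), ← hsemiconj.iterate_right,
      Polynomial.iterate_char_logisticDerivation_X, hsemiconj]

/-- Let `k` be a field of characteristic `p > 0` and consider on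
`k[u₀, u₁, …, u_{n−2}]` with `n ≥ 3` (here `m + 2` variables, `m : ℕ` arbitrary) the
derivation `∂ = u₀ ∂/∂u₀ + Σ_{i≥1} (uᵢ − uᵢ²) ∂/∂uᵢ`.  Then `∂^[p] = ∂`. -/
theorem statement16 {k : Type*} [Field k] (p m : ℕ) [Fact p.Prime] [CharP k p]
    (f : MvPolynomial (Fin (m + 2)) k) :
    (fun g : MvPolynomial (Fin (m + 2)) k =>
        ∑ i, (if i = 0 then X i else X i - X i ^ 2) * pderiv i g)^[p] f
      = ∑ i, (if i = 0 then X i else X i - X i ^ 2) * pderiv i f := by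
  let D : Derivation k (MvPolynomial (Fin (m + 2)) k) (MvPolynomial (Fin (m + 2)) k) :=
    ∑ i, (if i = 0 then X i else X i - X i ^ 2 : MvPolynomial (Fin (m + 2)) k) • pderiv i
  have hD : ⇑D = fun g ↦ ∑ i, (if i = 0 then X i else X i - X i ^ 2) * pderiv i g := by
    funext g
    simp only [D, Derivation.coe_finset_sum, Finset.sum_apply, Derivation.smul_apply, smul_eq_mul]
  have hD_X (j : Fin (m + 2)) : D (X j) = X j ∨ D (X j) = X j - X j ^ 2 := by
    rw [hD]
    by_cases hj : j = 0 <;> simp [pderiv_X, Pi.single_apply, hj]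
  rw [← hD, iterate_char_derivation_eq_self p D hD_X, hD]
end
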